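/- Let ψ be a periodic diffeomorphism of the product T² × [0,1] which is isotopic to the identity and whose restriction to each boundary torus T² × {i}, i = 0, 1, is a translation with rational slope αᵢ ∈ H₁(T²; Z) ⊗ Q. Then α₀ = α₁. -/

import Mathlib

noncomputable section

open CategoryTheory Topology

/-! ### The group of self-homeomorphisms (our model for `Diff M`) -/

instance homeoGroup (M : Type*) [TopologicalSpace M] : Group (M ≃ₜ M) where
  mul f g := g.trans f
  one := Homeomorph.refl M
  inv := Homeomorph.symm
  mul_assoc _ _ _ := Homeomorph.ext fun _ => rfl
  one_mul _ := Homeomorph.ext fun _ => rfl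
  mul_one _ := Homeomorph.ext fun _ => rfl
  inv_mul_cancel f := Homeomorph.ext f.symm_apply_apply

instance homeoMulAction (M : Type*) [TopologicalSpace M] : MulAction (M ≃ₜ M) M where
  smul f x := f x
  one_smul _ := rfl
  mul_smul _ _ _ := rfl

@[simp] lemma homeo_smul_def {M : Type*} [TopologicalSpace M] (f : M ≃ₜ M) (x : M) :
    f • x = f x := rfl

/-! ### Singular homology -/

/-- The singular chain complex functor with coefficients in a ring `R`. -/
def singularChainComplexFunctor (R : Type) [Ring R] :
    TopCat.{0} ⥤ ChainComplex (ModuleCat.{0} R) ℕ :=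
  TopCat.toSSet ⋙ ((SimplicialObject.whiskering _ _).obj (ModuleCat.free R)) ⋙
    AlgebraicTopology.alternatingFaceMapComplex _

/-- The `n`-th singular homology functor with coefficients in `R`. -/
def singularHomologyFunctor (R : Type) [Ring R] (n : ℕ) : TopCat.{0} ⥤ ModuleCat.{0} R :=
  singularChainComplexFunctor R ⋙ HomologicalComplex.homologyFunctor _ _ n

/-- The `n`-th singular homology of a topological space, with coefficients in `R`. -/
def SingularHomology (R : Type) [Ring R] (n : ℕ) (X : Type) [TopologicalSpace X] :
    ModuleCat.{0} R :=
  (singularHomologyFunctor R n).obj (TopCat.of X)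

/-- The standard 3-sphere. -/
abbrev Sphere3 : Type := (Metric.sphere (0 : EuclideanSpace ℝ (Fin 4)) 1 : Set _)

/-- A closed orientable topological `3`-manifold having the same homology (with coefficients
in `R`) as the `3`-sphere.  (Orientability is implied by `H₃(M;R) ≅ H₃(S³;R) ≅ R`.) -/
def IsHomology3Sphere (R : Type) [Ring R] (M : Type) [TopologicalSpace M] : Prop :=
  CompactSpace M ∧ ConnectedSpace M ∧ T2Space M ∧ SecondCountableTopology M ∧
    Nonempty (ChartedSpace (EuclideanSpace ℝ (Fin 3)) M) ∧
    ∀ n, Nonempty (SingularHomology R n M ≅ SingularHomology R n Sphere3)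

/-- An integral homology 3-sphere. -/
def IsZHomology3Sphere (M : Type) [TopologicalSpace M] : Prop :=
  IsHomology3Sphere ℤ M

/-- A homeomorphism preserves the orientation if it induces the identity on
`H₃(M;ℤ)`. -/
def OrientationPreserving {M : Type} [TopologicalSpace M] (ψ : M ≃ₜ M) : Prop :=
  (singularHomologyFunctor ℤ 3).map (TopCat.isoOfHomeo (X := TopCat.of M) (Y := TopCat.of M) ψ).hom = 𝟙 _
/-! ### Orbit spaces, rotations, knots, branched covers -/

/-- The space of orbits `|M/ψ|` of the cyclic group generated by `ψ`,
with the quotient topology. -/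
abbrev OrbitSpace {M : Type} [TopologicalSpace M] (ψ : M ≃ₜ M) : Type :=
  MulAction.orbitRel.Quotient (Subgroup.zpowers ψ) M

/-- The canonical projection `M → |M/ψ|`. -/
def orbitProj {M : Type} [TopologicalSpace M] (ψ : M ≃ₜ M) : M → OrbitSpace ψ :=
  Quotient.mk _

/-- A periodic map has trivial quotient if its space of orbits is homeomorphic to `S³`. -/
def TrivialQuotient {M : Type} [TopologicalSpace M] (ψ : M ≃ₜ M) : Prop :=
  Nonempty (OrbitSpace ψ ≃ₜ Sphere3)

/-- The fixed-point set. -/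
def FixSet {M : Type} [TopologicalSpace M] (ψ : M ≃ₜ M) : Set M := {x | ψ x = x}

/-- A rotation: a nontrivial periodic orientation-preserving homeomorphism whose fixed-point
set is nonempty and connected. -/
def IsRotation {M : Type} [TopologicalSpace M] (ψ : M ≃ₜ M) : Prop :=
  ψ ≠ 1 ∧ IsOfFinOrder ψ ∧ OrientationPreserving ψ ∧ IsConnected (FixSet ψ)

/-- `M` is homeomorphic to the 3-sphere. -/
def HomeoToSphere3 (M : Type) [TopologicalSpace M] : Prop := Nonempty (M ≃ₜ Sphere3)

/-- The standard circle, i.e. the standard unknot model. -/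
abbrev Circle1 : Type := (Metric.sphere (0 : EuclideanSpace ℝ (Fin 2)) 1 : Set _)

/-- A knot: an embedded circle in `S³`. -/
def IsKnot (K : Set Sphere3) : Prop :=
  ∃ e : Circle1 → Sphere3, IsEmbedding e ∧ Set.range e = K

/-- Equivalence of knots: there is a homeomorphism of `S³` carrying one to the other. -/
def KnotEquiv (K K' : Set Sphere3) : Prop := ∃ h : Sphere3 ≃ₜ Sphere3, h '' K = K'

/-- The standard (trivial) knot in `S³`: a great circle. -/
def StandardCircle : Set Sphere3 :=
  {x | (x : EuclideanSpace ℝ (Fin 4)) 2 = 0 ∧ (x : EuclideanSpace ℝ (Fin 4)) 3 = 0}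

/-- A knot is trivial if it is equivalent to a great circle. -/
def IsTrivialKnot (K : Set Sphere3) : Prop := KnotEquiv StandardCircle K

/-- `M` is the `p`-fold cyclic cover of `S³` branched along the knot `K`: there is a
rotation of `M` of order `p`, acting freely outside its fixed-point set, with orbit space
`S³`, whose branch locus (the image of the fixed-point set) is `K`. -/
def IsCyclicBranchedCover (M : Type) [TopologicalSpace M] (p : ℕ) (K : Set Sphere3) : Prop :=
  ∃ ψ : M ≃ₜ M, IsRotation ψ ∧ orderOf ψ = p ∧
    (∀ x : M, x ∉ FixSet ψ → ∀ k : ℕ, 0 < k → k < p → (ψ ^ k) x ≠ x) ∧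
    ∃ h : OrbitSpace ψ ≃ₜ Sphere3, h '' (orbitProj ψ '' FixSet ψ) = K

/-! ### Irreducibility -/

abbrev Sphere2 : Type := (Metric.sphere (0 : EuclideanSpace ℝ (Fin 3)) 1 : Set _)
abbrev Ball3 : Type := (Metric.closedBall (0 : EuclideanSpace ℝ (Fin 3)) 1 : Set _)

/-- An embedded 2-sphere in `M`. -/
def IsEmbeddedSphere2 {M : Type} [TopologicalSpace M] (S : Set M) : Prop :=
  ∃ e : Sphere2 → M, IsEmbedding e ∧ Set.range e = S

/-- `S` bounds a 3-ball in `M`: there is an embedding of the closed 3-ball into `M`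
whose boundary sphere maps onto `S`. -/
def BoundsBall3 {M : Type} [TopologicalSpace M] (S : Set M) : Prop :=
  ∃ e : Ball3 → M, IsEmbedding e ∧
    e '' {x : Ball3 | ‖(x : EuclideanSpace ℝ (Fin 3))‖ = 1} = S

/-- A 3-manifold is irreducible if every embedded 2-sphere bounds a 3-ball. -/
def IsIrreducible3Manifold (M : Type) [TopologicalSpace M] : Prop :=
  ∀ S : Set M, IsEmbeddedSphere2 S → BoundsBall3 S

/-! ### Statement 19 (Claim 5.5, after Meeks–Scott).
A periodic self-homeomorphism of `T² × [0,1]` isotopic to the identity whose restriction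
to each boundary torus is a translation (necessarily of rational slope) translates by the
same element on both boundary tori. -/

/-- The 2-torus `ℝ²/ℤ²`. -/
abbrev Torus2 : Type := AddCircle (1 : ℝ) × AddCircle (1 : ℝ)

/-- `v` is rational: it lies in `ℚ²/ℤ² ⊆ T²`.  A translation of `T²` by such a vector is
periodic and has a rational slope in `H₁(T²;ℤ) ⊗ ℚ`. -/
def IsRationalVector (v : Torus2) : Prop :=
  ∃ a : ℚ × ℚ, v = (((a.1 : ℝ) : AddCircle (1 : ℝ)), ((a.2 : ℝ) : AddCircle (1 : ℝ)))

/-!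
Fix a coordinate `c : T² × [0,1] → ℝ/ℤ` of the torus factor. Lifting the isotopy from the
identity along the covering `ℝ → ℝ/ℤ` gives a continuous `d : T² × [0,1] → ℝ` with
`d x ≡ c (ψ x) - c x (mod 1)`. Summing `d` along an orbit of length `n = orderOf ψ` gives an
integer-valued continuous function, hence a constant. On a boundary torus `d` lifts the constant
translation, so it is a constant `w`, and the orbit sum there is `n • w`. Comparing the two
boundary tori gives `w₀ = w₁`, whose images mod 1 are the translation vectors.
-/

open Finset Set

namespace IsCoveringMap

variable {M N G E : Type*} [TopologicalSpace M] [TopologicalSpace N]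
  [AddCommGroup G] [TopologicalSpace G] [AddCommGroup E] [TopologicalSpace E]
  {π : E →+ G}

theorem exists_lift_sub_of_homotopic [ContinuousSub G] (hπ : IsCoveringMap π)
    {f₀ f₁ : C(M, N)} (h : f₀.Homotopic f₁) (c : C(N, G)) :
    ∃ d : C(M, E), ∀ x, π (d x) = c (f₁ x) - c (f₀ x) := by
  obtain ⟨F⟩ := h
  let H : C(unitInterval × M, G) := ⟨fun q => c (F q) - c (f₀ q.2), by fun_prop⟩
  have H_zero : ∀ x, H (0, x) = π ((0 : C(M, E)) x) := by simp [H]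
  refine ⟨(hπ.liftHomotopy H 0 H_zero).comp ⟨fun x => (1, x), by fun_prop⟩, fun x => ?_⟩
  simpa [H] using congr_fun (hπ.liftHomotopy_lifts H 0 H_zero) (1, x)

variable {f : M → M} {c : M → G} {d : M → E}

theorem sum_lift_iterate_eq [PreconnectedSpace M] [ContinuousAdd E] (hπ : IsCoveringMap π)
    (hf : Continuous f) {n : ℕ} (hfn : f^[n] = id) (hd : Continuous d)
    (hdc : ∀ x, π (d x) = c (f x) - c x)
    (x y : M) : ∑ k ∈ range n, d (f^[k] x) = ∑ k ∈ range n, d (f^[k] y) := by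
  have telescope : ∀ x, π (∑ k ∈ range n, d (f^[k] x)) = 0 := fun x => by
    simp only [map_sum, hdc, ← Function.iterate_succ_apply' f]
    rw [sum_range_sub (fun k => c (f^[k] x)), hfn, Function.iterate_zero, sub_self]
  refine hπ.const_of_comp ?_ (fun x y => (telescope x).trans (telescope y).symm) x y
  exact continuous_finsetSum _ fun k _ => hd.comp (hf.iterate k)

theorem sum_lift_iterate_eq_nsmul (hπ : IsCoveringMap π) {s : Set M} (hs : IsPreconnected s)
    (hfs : MapsTo f s s) (hd : Continuous d) (hdc : ∀ x, π (d x) = c (f x) - c x) {v : G}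
    (hv : ∀ x ∈ s, c (f x) - c x = v) {x : M} (hx : x ∈ s) (n : ℕ) :
    ∑ k ∈ range n, d (f^[k] x) = n • d x := by
  have hconst : ∀ y ∈ s, d y = d x := fun y hy =>
    hπ.constOn_of_comp hs hd.continuousOn
      (fun a ha b hb => by rw [hdc, hdc, hv a ha, hv b hb]) hy hx
  rw [sum_congr rfl fun k _ => hconst _ (hfs.iterate k hx), sum_const, card_range]

theorem displacement_eq_of_homotopic_id [PreconnectedSpace M] [ContinuousSub G]
    [ContinuousAdd E] [IsAddTorsionFree E] (hπ : IsCoveringMap π) {f : C(M, M)}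
    (hf : (ContinuousMap.id M).Homotopic f) {n : ℕ} (hn : n ≠ 0) (hfn : f^[n] = id)
    (c : C(M, G)) {s₀ s₁ : Set M} (hs₀ : IsPreconnected s₀) (hs₁ : IsPreconnected s₁)
    (hfs₀ : MapsTo f s₀ s₀) (hfs₁ : MapsTo f s₁ s₁) {v₀ v₁ : G}
    (hv₀ : ∀ x ∈ s₀, c (f x) - c x = v₀) (hv₁ : ∀ x ∈ s₁, c (f x) - c x = v₁)
    {x₀ x₁ : M} (hx₀ : x₀ ∈ s₀) (hx₁ : x₁ ∈ s₁) : v₀ = v₁ := by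
  obtain ⟨d, hdc⟩ := hπ.exists_lift_sub_of_homotopic hf c
  simp only [ContinuousMap.id_apply] at hdc
  have hd_eq : d x₀ = d x₁ := by
    apply IsAddTorsionFree.nsmul_right_injective hn
    dsimp only
    rw [← hπ.sum_lift_iterate_eq_nsmul hs₀ hfs₀ d.continuous hdc hv₀ hx₀,
      ← hπ.sum_lift_iterate_eq_nsmul hs₁ hfs₁ d.continuous hdc hv₁ hx₁,
      hπ.sum_lift_iterate_eq f.continuous hfn d.continuous hdc]
  rw [← hv₀ x₀ hx₀, ← hv₁ x₁ hx₁, ← hdc, ← hdc, hd_eq]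

end IsCoveringMap

theorem periodic_homeo_of_torus_times_interval_boundary_translations_agree_general
    (ψ : (Torus2 × unitInterval) ≃ₜ (Torus2 × unitInterval))
    (hper : IsOfFinOrder ψ)
    -- `ψ` is isotopic to the identity:
    (hiso : ∃ F : C(unitInterval × (Torus2 × unitInterval), Torus2 × unitInterval),
      (∀ x, F (0, x) = x) ∧ (∀ x, F (1, x) = ψ x) ∧
      ∀ t : unitInterval, IsHomeomorph fun x => F (t, x))
    -- the restrictions of `ψ` to the two boundary tori are translations
    -- by (rational) vectors `v₀` and `v₁`:
    (v₀ v₁ : Torus2)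
    (hbd₀ : ∀ x : Torus2, ψ (x, 0) = (x + v₀, 0))
    (hbd₁ : ∀ x : Torus2, ψ (x, 1) = (x + v₁, 1)) :
    v₀ = v₁ := by
  obtain ⟨F, hF0, hF1, -⟩ := hiso
  have hhom : (ContinuousMap.id _).Homotopic (ψ : C(Torus2 × unitInterval, _)) :=
    ⟨⟨F, hF0, hF1⟩⟩
  have hψn : (⇑ψ)^[orderOf ψ] = id := by
    change (ψ • ·)^[orderOf ψ] = id
    rw [smul_iterate, pow_orderOf_eq_one]
    rfl
  have hboundary : ∀ (i : unitInterval) (v : Torus2), (∀ x, ψ (x, i) = (x + v, i)) →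
      MapsTo ψ (range (·, i)) (range (·, i)) ∧ ∀ p ∈ range (·, i), (ψ p).1 - p.1 = v := by
    rintro i v h
    refine ⟨?_, ?_⟩ <;> rintro _ ⟨x, rfl⟩ <;> simp [h]
  obtain ⟨hmaps₀, hdisp₀⟩ := hboundary 0 v₀ hbd₀
  obtain ⟨hmaps₁, hdisp₁⟩ := hboundary 1 v₁ hbd₁
  have hcoord : ∀ c : Torus2 →+ AddCircle (1 : ℝ), Continuous c → c v₀ = c v₁ := fun c hc =>
    (AddCircle.isCoveringMap_coe (1 : ℝ)).displacement_eq_of_homotopic_id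
      (π := QuotientAddGroup.mk' _) hhom hper.orderOf_pos.ne' hψn ⟨fun p => c p.1, by fun_prop⟩
      (isPreconnected_range (by fun_prop)) (isPreconnected_range (by fun_prop)) hmaps₀ hmaps₁
      (fun p hp => by simp [← map_sub, hdisp₀ p hp])
      (fun p hp => by simp [← map_sub, hdisp₁ p hp])
      (mem_range_self 0) (mem_range_self 0)
  exact Prod.ext (hcoord (AddMonoidHom.fst _ _) continuous_fst)
    (hcoord (AddMonoidHom.snd _ _) continuous_snd)

theorem periodic_homeo_of_torus_times_interval_boundary_translations_agree
    (ψ : (Torus2 × unitInterval) ≃ₜ (Torus2 × unitInterval))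
    (hper : IsOfFinOrder ψ)
    -- `ψ` is isotopic to the identity:
    (hiso : ∃ F : C(unitInterval × (Torus2 × unitInterval), Torus2 × unitInterval),
      (∀ x, F (0, x) = x) ∧ (∀ x, F (1, x) = ψ x) ∧
      ∀ t : unitInterval, IsHomeomorph fun x => F (t, x))
    -- the restrictions of `ψ` to the two boundary tori are translations
    -- by (rational) vectors `v₀` and `v₁`:
    (v₀ v₁ : Torus2) (hv₀ : IsRationalVector v₀) (hv₁ : IsRationalVector v₁)
    (hbd₀ : ∀ x : Torus2, ψ (x, 0) = (x + v₀, 0))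
    (hbd₁ : ∀ x : Torus2, ψ (x, 1) = (x + v₁, 1)) :
    v₀ = v₁ :=
  periodic_homeo_of_torus_times_interval_boundary_translations_agree_general ψ hper hiso v₀ v₁ hbd₀
    hbd₁
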